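/- arXiv:1510.09073 — 7 statements merged into one kernel-verified Lean document; each statement's English description precedes it below -/
import Mathlib

section
/- Generalized Akin's Lemma: Let S_X and S_Y be measurable spaces, let σ_X be a memory-one strategy for player X (a Markov kernel from S_X × S_Y to S_X) with initial action σ_X^0 (a probability measure on S_X), let λ ∈ (0,1), and let (ν_t)_{t≥0} be any play sequence compatible with (σ_X^0, σ_X). Then for every measurable set E ⊆ S_X, the series ∑_{t=0}^∞ λ^t ∫_{S_X×S_Y} [𝟙_E(x) − λ·σ_X[x,y](E)] dν_t(x,y) converges and equals σ_X^0(E). -/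
open MeasureTheory ProbabilityTheory

/-! Write `a t` for the mass that `ν t` puts on `E × S_Y`. The compatibility condition says that
`∫ σX[x,y](E) dν_t = a (t + 1)`, so the `t`-th summand is `λ^t a t - λ^(t+1) a (t+1)` and the
series telescopes to `a 0 = σ0 E`; it converges absolutely because `0 ≤ a t ≤ 1`. -/

theorem hasSum_pow_mul_sub_mul_succ {a : ℕ → ℝ} {C lam : ℝ} (ha : ∀ t, ‖a t‖ ≤ C)
    (hlam : |lam| < 1) :
    HasSum (fun t => lam ^ t * (a t - lam * a (t + 1))) (a 0) := by
  set g : ℕ → ℝ := fun t => lam ^ t * a t with hg_def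
  have hg : Summable g :=
    ((summable_geometric_of_lt_one (abs_nonneg lam) hlam).mul_right C).of_norm_bounded
      fun t => by
        rw [hg_def, norm_mul, norm_pow, Real.norm_eq_abs]
        exact mul_le_mul_of_nonneg_left (ha t) (pow_nonneg (abs_nonneg _) _)
  have hshift : HasSum (fun t => g (t + 1)) (∑' t, g t - g 0) := by
    rw [← Finset.sum_range_one g]
    exact (hasSum_nat_add_iff' 1).2 hg.hasSum
  have hsummand : (fun t => lam ^ t * (a t - lam * a (t + 1))) = fun t => g t - g (t + 1) := by
    ext t
    simp only [hg_def]
    ring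
  rw [hsummand, show a 0 = g 0 by simp [hg_def], ← sub_sub_cancel (∑' t, g t) (g 0)]
  exact hg.hasSum.sub hshift

section ProductSpace

variable {α β : Type*}

theorem indicator_fst_one_eq (E : Set α) :
    (fun q : α × β => E.indicator (fun _ => (1 : ℝ)) q.1) = (E ×ˢ Set.univ).indicator 1 := by
  funext q
  by_cases hq : q.1 ∈ E <;> simp [hq]

variable [MeasurableSpace α] [MeasurableSpace β]

theorem integral_indicator_fst_one (μ : Measure (α × β)) {E : Set α} (hE : MeasurableSet E) :
    ∫ q, E.indicator (fun _ => (1 : ℝ)) q.1 ∂μ = μ.real (E ×ˢ Set.univ) := by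
  rw [indicator_fst_one_eq, integral_indicator_one (hE.prod MeasurableSet.univ)]

theorem integrable_indicator_fst_one (μ : Measure (α × β)) [IsFiniteMeasure μ] {E : Set α}
    (hE : MeasurableSet E) :
    Integrable (fun q => E.indicator (fun _ => (1 : ℝ)) q.1) μ := by
  rw [indicator_fst_one_eq]
  exact (integrable_const 1).indicator (hE.prod MeasurableSet.univ)

theorem integral_indicator_fst_sub_mul_kernel (μ : Measure (α × β)) [IsFiniteMeasure μ]
    {γ : Type*} [MeasurableSpace γ] (κ : Kernel (α × β) γ) {E : Set α} (hE : MeasurableSet E)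
    {F : Set γ} (hF : MeasurableSet F) (hκF : ∫⁻ q, κ q F ∂μ ≠ ⊤) (c : ℝ) :
    ∫ q, (E.indicator (fun _ => (1 : ℝ)) q.1 - c * (κ q F).toReal) ∂μ
      = μ.real (E ×ˢ Set.univ) - c * (∫⁻ q, κ q F ∂μ).toReal := by
  have hκ : Measurable fun q => κ q F := κ.measurable_coe hF
  rw [integral_sub (integrable_indicator_fst_one μ hE)
      ((integrable_toReal_of_lintegral_ne_top hκ.aemeasurable hκF).const_mul c),
    integral_const_mul, integral_indicator_fst_one μ hE,
    integral_toReal hκ.aemeasurable (ae_lt_top hκ hκF)]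

end ProductSpace

theorem generalized_akin_lemma_general
    {SX SY : Type*} [MeasurableSpace SX] [MeasurableSpace SY]
    (σX : Kernel (SX × SY) SX)
    (σ0 : Measure SX)
    (lam : ℝ) (hlam : lam ∈ Set.Ioo (0 : ℝ) 1)
    (ν : ℕ → Measure (SX × SY)) (hνp : ∀ t, IsProbabilityMeasure (ν t))
    (hν0 : ∀ E : Set SX, MeasurableSet E → ν 0 (E ×ˢ Set.univ) = σ0 E)
    (hνsucc : ∀ t : ℕ, ∀ E : Set SX, MeasurableSet E →
      ν (t + 1) (E ×ˢ Set.univ) = ∫⁻ q, σX q E ∂ ν t)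
    (E : Set SX) (hE : MeasurableSet E) :
    HasSum
      (fun t : ℕ => lam ^ t *
        ∫ q, (E.indicator (fun _ => (1 : ℝ)) q.1 - lam * (σX q E).toReal) ∂ ν t)
      (σ0 E).toReal := by
  set a : ℕ → ℝ := fun t => (ν t).real (E ×ˢ Set.univ)
  have hstep : ∀ t, ∫ q, (E.indicator (fun _ => (1 : ℝ)) q.1 - lam * (σX q E).toReal) ∂ ν t
      = a t - lam * a (t + 1) := fun t => by
    rw [integral_indicator_fst_sub_mul_kernel _ σX hE hE
      (hνsucc t E hE ▸ measure_ne_top _ _), ← hνsucc t E hE]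
    rfl
  have ha : ∀ t, ‖a t‖ ≤ 1 := fun t => by
    rw [Real.norm_eq_abs, abs_of_nonneg measureReal_nonneg]
    exact measureReal_le_one
  have hsum := hasSum_pow_mul_sub_mul_succ ha (abs_lt.2 ⟨by linarith [hlam.1], hlam.2⟩)
  simp_rw [hstep]
  rwa [show a 0 = (σ0 E).toReal from congrArg ENNReal.toReal (hν0 E hE)] at hsum

/-- **Generalized Akin's Lemma.** For any memory-one strategy `σX` (a Markov kernel)
with initial action `σ0`, discount factor `lam ∈ (0,1)`, and any play sequence `ν`
compatible with `(σ0, σX)`, for every measurable set `E ⊆ S_X` the series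
`∑ₜ lamᵗ ∫ [𝟙_E(x) − lam·σX[x,y](E)] dνₜ(x,y)` converges and equals `σ0 E`. -/
theorem generalized_akin_lemma
    {SX SY : Type*} [MeasurableSpace SX] [MeasurableSpace SY]
    (σX : Kernel (SX × SY) SX) [IsMarkovKernel σX]
    (σ0 : Measure SX) [IsProbabilityMeasure σ0]
    (lam : ℝ) (hlam : lam ∈ Set.Ioo (0 : ℝ) 1)
    (ν : ℕ → Measure (SX × SY)) (hνp : ∀ t, IsProbabilityMeasure (ν t))
    (hν0 : ∀ E : Set SX, MeasurableSet E → ν 0 (E ×ˢ Set.univ) = σ0 E)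
    (hνsucc : ∀ t : ℕ, ∀ E : Set SX, MeasurableSet E →
      ν (t + 1) (E ×ˢ Set.univ) = ∫⁻ q, σX q E ∂ ν t)
    (E : Set SX) (hE : MeasurableSet E) :
    HasSum
      (fun t : ℕ => lam ^ t *
        ∫ q, (E.indicator (fun _ => (1 : ℝ)) q.1 - lam * (σX q E).toReal) ∂ ν t)
      (σ0 E).toReal :=
  generalized_akin_lemma_general σX σ0 lam hlam ν hνp hν0 hνsucc E hE
end

section
/- Let S_X and S_Y be measurable spaces, let σ_X be a memory-one strategy for player X with initial action σ_X^0, let λ ∈ (0,1), let (ν_t)_{t≥0} be any play sequence compatible with (σ_X^0, σ_X), and let ψ : S_X → ℝ be a bounded measurable function. Then ∑_{t=0}^∞ λ^t ∫_{S_X×S_Y} [ψ(x) − λ·∫_{S_X} ψ(s) dσ_X[x,y](s)] dν_t(x,y) = ∫_{S_X} ψ(s) dσ_X^0(s). -/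
/-!
Let `aₜ = ∫ ψ d(νₜ)₁`, where `(νₜ)₁` is the first marginal of `νₜ`. Compatibility says exactly
`(ν₀)₁ = σ⁰` and `(νₜ₊₁)₁ = σ ∘ νₜ`, so `∫ ∫ ψ dσ[q] dνₜ(q) = aₜ₊₁` and the `t`-th term of the
series is `λᵗ aₜ - λᵗ⁺¹ aₜ₊₁`. As `|aₜ| ≤ sup |ψ|`, the sequence `λᵗ aₜ` is summable and the
series telescopes to `a₀ = ∫ ψ dσ⁰`.
-/

open MeasureTheory ProbabilityTheory

namespace MeasureTheory.Measure

variable {α β E : Type*} {mα : MeasurableSpace α} {mβ : MeasurableSpace β}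
  [NormedAddCommGroup E] [NormedSpace ℝ E] {κ : Kernel α β} {μ : Measure α} {f : β → E}

lemma integrable_integral_of_integrable_comp (hf : Integrable f (κ ∘ₘ μ)) :
    Integrable (fun a ↦ ∫ x, f x ∂κ a) μ := by
  rw [comp_eq_comp_const_apply] at hf
  simpa using hf.integral_comp

lemma integral_comp (hf : Integrable f (κ ∘ₘ μ)) :
    ∫ x, f x ∂(κ ∘ₘ μ) = ∫ a, ∫ x, f x ∂κ a ∂μ := by
  rw [comp_eq_comp_const_apply] at hf ⊢
  simpa using Kernel.integral_comp hf

lemma fst_eq_of_forall_prod_univ {ρ : Measure (α × β)}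
    (h : ∀ s, MeasurableSet s → ρ (s ×ˢ Set.univ) = μ s) : ρ.fst = μ :=
  ext fun s hs ↦ by rw [fst_apply hs, ← Set.prod_univ, h s hs]

lemma integral_comp_fst {ρ : Measure (α × β)} {g : α → E} (hg : AEStronglyMeasurable g ρ.fst) :
    ∫ p, g p.1 ∂ρ = ∫ x, g x ∂ρ.fst :=
  (integral_map measurable_fst.aemeasurable hg).symm

end MeasureTheory.Measure

lemma abs_integral_le_of_forall_abs_le {α : Type*} {_ : MeasurableSpace α} {μ : Measure α}
    [IsProbabilityMeasure μ] {f : α → ℝ} {C : ℝ} (h : ∀ x, |f x| ≤ C) :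
    |∫ x, f x ∂μ| ≤ C := by
  simpa using norm_integral_le_of_norm_le_const (μ := μ)
    (Filter.Eventually.of_forall fun x ↦ (Real.norm_eq_abs (f x)).trans_le (h x))

lemma summable_pow_mul_of_abs_le {lam C : ℝ} (hlam : |lam| < 1) {a : ℕ → ℝ}
    (ha : ∀ t, |a t| ≤ C) : Summable fun t ↦ lam ^ t * a t := by
  refine .of_norm_bounded ((summable_geometric_of_lt_one (abs_nonneg lam) hlam).mul_left C)
    fun t ↦ ?_
  rw [norm_mul, norm_pow, Real.norm_eq_abs, Real.norm_eq_abs, mul_comm]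
  exact mul_le_mul_of_nonneg_right (ha t) (by positivity)

lemma Summable.hasSum_sub_succ {G : Type*} [AddCommGroup G] [TopologicalSpace G]
    [IsTopologicalAddGroup G] {b : ℕ → G} (hb : Summable b) :
    HasSum (fun t ↦ b t - b (t + 1)) (b 0) := by
  simpa using hb.hasSum.sub ((hasSum_nat_add_iff' 1).mpr hb.hasSum)

theorem akin_lemma_bounded_function_general
    {SX SY : Type*} [MeasurableSpace SX] [MeasurableSpace SY]
    (σX : Kernel (SX × SY) SX)
    (σ0 : Measure SX)
    (lam : ℝ) (hlam : lam ∈ Set.Ioo (0 : ℝ) 1)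
    (ν : ℕ → Measure (SX × SY)) (hνp : ∀ t, IsProbabilityMeasure (ν t))
    (hν0 : ∀ E : Set SX, MeasurableSet E → ν 0 (E ×ˢ Set.univ) = σ0 E)
    (hνsucc : ∀ t : ℕ, ∀ E : Set SX, MeasurableSet E →
      ν (t + 1) (E ×ˢ Set.univ) = ∫⁻ q, σX q E ∂ ν t)
    (ψ : SX → ℝ) (hψm : Measurable ψ) (Cψ : ℝ) (hψb : ∀ s, |ψ s| ≤ Cψ) :
    HasSum
      (fun t : ℕ => lam ^ t *
        ∫ q, (ψ q.1 - lam * ∫ s, ψ s ∂ (σX q)) ∂ ν t)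
      (∫ s, ψ s ∂ σ0) := by
  have hfst0 : (ν 0).fst = σ0 := Measure.fst_eq_of_forall_prod_univ hν0
  have hfst_succ (t : ℕ) : (ν (t + 1)).fst = σX ∘ₘ ν t :=
    Measure.fst_eq_of_forall_prod_univ fun E hE ↦ by
      rw [hνsucc t E hE, Measure.bind_apply hE σX.aemeasurable]
  have hψint (t : ℕ) : Integrable ψ (ν t).fst :=
    .of_bound hψm.aestronglyMeasurable Cψ (.of_forall hψb)
  have hterm (t : ℕ) : lam ^ t * ∫ q, (ψ q.1 - lam * ∫ s, ψ s ∂σX q) ∂ν t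
      = lam ^ t * ∫ s, ψ s ∂(ν t).fst - lam ^ (t + 1) * ∫ s, ψ s ∂(ν (t + 1)).fst := by
    have hcomp := hfst_succ t ▸ hψint (t + 1)
    have hψfst : Integrable (fun q ↦ ψ q.1) (ν t) := (hψint t).comp_measurable measurable_fst
    have hψσ := Measure.integrable_integral_of_integrable_comp hcomp
    rw [integral_sub hψfst (hψσ.const_mul lam),
      integral_const_mul, Measure.integral_comp_fst hψm.aestronglyMeasurable,
      ← Measure.integral_comp hcomp, hfst_succ]
    ring
  have hlam_abs : |lam| < 1 := by rw [abs_of_pos hlam.1]; exact hlam.2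
  have hsum := (summable_pow_mul_of_abs_le hlam_abs
    fun t ↦ abs_integral_le_of_forall_abs_le (μ := (ν t).fst) hψb).hasSum_sub_succ
  simpa [hterm, hfst0] using hsum

/-- For any memory-one strategy `σX` with initial action `σ0`, discount factor
`lam ∈ (0,1)`, play sequence `ν` compatible with `(σ0, σX)`, and bounded measurable
`ψ : S_X → ℝ`, the series
`∑ₜ lamᵗ ∫ [ψ(x) − lam·∫ ψ dσX[x,y]] dνₜ(x,y)` converges and equals `∫ ψ dσ0`. -/
theorem akin_lemma_bounded_function
    {SX SY : Type*} [MeasurableSpace SX] [MeasurableSpace SY]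
    (σX : Kernel (SX × SY) SX) [IsMarkovKernel σX]
    (σ0 : Measure SX) [IsProbabilityMeasure σ0]
    (lam : ℝ) (hlam : lam ∈ Set.Ioo (0 : ℝ) 1)
    (ν : ℕ → Measure (SX × SY)) (hνp : ∀ t, IsProbabilityMeasure (ν t))
    (hν0 : ∀ E : Set SX, MeasurableSet E → ν 0 (E ×ˢ Set.univ) = σ0 E)
    (hνsucc : ∀ t : ℕ, ∀ E : Set SX, MeasurableSet E →
      ν (t + 1) (E ×ˢ Set.univ) = ∫⁻ q, σX q E ∂ ν t)
    (ψ : SX → ℝ) (hψm : Measurable ψ) (Cψ : ℝ) (hψb : ∀ s, |ψ s| ≤ Cψ) :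
    HasSum
      (fun t : ℕ => lam ^ t *
        ∫ q, (ψ q.1 - lam * ∫ s, ψ s ∂ (σX q)) ∂ ν t)
      (∫ s, ψ s ∂ σ0) :=
  akin_lemma_bounded_function_general σX σ0 lam hlam ν hνp hν0 hνsucc ψ hψm Cψ hψb
end

section
/- Two-point extortionate/generous strategies in the continuous Donation Game: In the continuous Donation Game, let χ ≥ 1, 0 ≤ κ ≤ b(K) − c(K), and let λ ∈ (0,1) satisfy λ ≥ (b(K) + χ·c(K)) / (χ·b(K) + c(K)). Let p_0 ∈ [0,1] satisfy max{ ((χ−1)κ − λ(χ·b(K)+c(K)) + (b(K)+χ·c(K))) / ((1−λ)(χ·b(K)+c(K))), 0 } ≤ p_0 ≤ min{ (χ−1)κ / ((1−λ)(χ·b(K)+c(K))), 1 }. Define, for y ∈ [0,K], p(y) = (1/λ)·( (b(y) + χ·c(y) + (χ−1)κ) / (χ·b(K) + c(K)) − (1−λ)·p_0 ). Then 0 ≤ p(y) ≤ 1 for every y ∈ [0,K], and the memory-one strategy σ_X[x,y] = (1 − p(y))·δ_0 + p(y)·δ_K with initial action σ_X^0 = (1−p_0)·δ_0 + p_0·δ_K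 satisfies: for every play sequence (ν_t)_{t≥0} compatible with (σ_X^0, σ_X), the expected discounted payoffs satisfy π_X − κ = χ·(π_Y − κ). -/
open MeasureTheory ProbabilityTheory Set

/-!
Under `σ_X`, player X plays `K` with some probability and `0` otherwise, so the `X`-marginal of
every `ν_t` is `(1 - r_t) δ_0 + r_t δ_K`, with `r_0 = p₀` and `r_{t+1} = ∫ p(y) dν_t`.
With `D = χ b(K) + c(K)` this makes the expected round payoffs satisfy
`E[u_X] - χ E[u_Y] = E[b(y) + χ c(y)] - D r_t`, and since `p` is affine in `b(y) + χ c(y)`,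
`E[b(y) + χ c(y)] = D (λ r_{t+1} + (1 - λ) p₀) - (χ - 1) κ`.
In the discounted sum, `∑ λ^t (λ r_{t+1} - r_t) = -r_0 = -p₀` telescopes, which exactly cancels
the constant `D (1 - λ) p₀` and leaves `π_X - χ π_Y = -(χ - 1) κ`.
-/

lemma abs_integral_le_of_abs_le {γ : Type*} [MeasurableSpace γ] {μ : Measure γ}
    [IsProbabilityMeasure μ] {f : γ → ℝ} {M : ℝ} (hM : ∀ x, |f x| ≤ M) :
    |∫ x, f x ∂μ| ≤ M := by
  simpa using norm_integral_le_of_norm_le_const (μ := μ) (f := f) (ae_of_all _ hM)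

lemma abs_le_of_mem_Icc_zero {x a : ℝ} (hx : x ∈ Icc 0 a) : |x| ≤ a :=
  (abs_of_nonneg hx.1).trans_le hx.2

lemma integrable_of_mem_Icc_zero {γ : Type*} [MeasurableSpace γ] {μ : Measure γ}
    [IsFiniteMeasure μ] {f : γ → ℝ} {M : ℝ} (hf : Measurable f) (hM : ∀ x, f x ∈ Icc 0 M) :
    Integrable f μ :=
  Integrable.of_bound hf.aestronglyMeasurable M
    (ae_of_all _ fun x => (Real.norm_eq_abs _).trans_le (abs_le_of_mem_Icc_zero (hM x)))

section TwoPoint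

variable {α : Type*} [MeasurableSpace α]

noncomputable def twoPoint (z w : α) (r : ℝ) : Measure α :=
  ENNReal.ofReal (1 - r) • Measure.dirac z + ENNReal.ofReal r • Measure.dirac w

lemma twoPoint_apply (z w : α) (r : ℝ) (E : Set α) :
    twoPoint z w r E
      = ENNReal.ofReal (1 - r) * Measure.dirac z E + ENNReal.ofReal r * Measure.dirac w E :=
  rfl

lemma integral_twoPoint [MeasurableSingletonClass α] (f : α → ℝ) (z w : α) {r : ℝ}
    (hr : r ∈ Icc 0 1) : ∫ x, f x ∂twoPoint z w r = (1 - r) * f z + r * f w := by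
  have hdirac (a : α) : Integrable f (Measure.dirac a) := integrable_dirac (by simp)
  rw [twoPoint, integral_add_measure ((hdirac z).smul_measure ENNReal.ofReal_ne_top)
      ((hdirac w).smul_measure ENNReal.ofReal_ne_top),
    integral_smul_measure, integral_smul_measure, integral_dirac, integral_dirac,
    ENNReal.toReal_ofReal (by linarith [hr.2]), ENNReal.toReal_ofReal hr.1, smul_eq_mul,
    smul_eq_mul]

lemma lintegral_twoPoint_apply {γ : Type*} [MeasurableSpace γ] {μ : Measure γ}
    [IsProbabilityMeasure μ] {f : γ → ℝ} (hf : Measurable f) (hf01 : ∀ q, f q ∈ Icc 0 1)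
    (z w : α) (E : Set α) :
    ∫⁻ q, twoPoint z w (f q) E ∂μ = twoPoint z w (∫ q, f q ∂μ) E := by
  have hfi : Integrable f μ := integrable_of_mem_Icc_zero hf hf01
  have hf' : ∫⁻ q, ENNReal.ofReal (f q) ∂μ = ENNReal.ofReal (∫ q, f q ∂μ) :=
    (ofReal_integral_eq_lintegral_ofReal hfi (ae_of_all _ fun q => (hf01 q).1)).symm
  have h1f : ∫⁻ q, ENNReal.ofReal (1 - f q) ∂μ = ENNReal.ofReal (1 - ∫ q, f q ∂μ) := by
    rw [← ofReal_integral_eq_lintegral_ofReal (f := fun q => 1 - f q)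
        ((integrable_const 1).sub hfi) (ae_of_all _ fun q => sub_nonneg.2 (hf01 q).2),
      integral_sub (integrable_const 1) hfi, integral_const, probReal_univ, one_smul]
  have h1m : Measurable fun q => ENNReal.ofReal (1 - f q) := by fun_prop
  simp only [twoPoint_apply]
  rw [lintegral_add_left (h1m.mul_const _), lintegral_mul_const _ h1m,
    lintegral_mul_const _ hf.ennreal_ofReal, hf', h1f]

end TwoPoint

section MarkovChain

variable {α β : Type*} [MeasurableSpace α] [MeasurableSpace β]

/-- The probability `r_t` that the first player uses its second action in round `t`. -/
noncomputable def secondActionProb (p₀ : ℝ) (p : β → ℝ) (ν : ℕ → Measure (α × β)) : ℕ → ℝ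
  | 0 => p₀
  | t + 1 => ∫ q, p q.2 ∂ν t

lemma secondActionProb_mem_Icc {p₀ : ℝ} {p : β → ℝ} {ν : ℕ → Measure (α × β)}
    (hν : ∀ t, IsProbabilityMeasure (ν t)) (hp₀ : p₀ ∈ Icc 0 1) (hp01 : ∀ y, p y ∈ Icc 0 1) :
    ∀ t, secondActionProb p₀ p ν t ∈ Icc 0 1
  | 0 => hp₀
  | t + 1 => ⟨integral_nonneg fun q => (hp01 q.2).1, (le_abs_self _).trans <|
      @abs_integral_le_of_abs_le _ _ _ (hν t) _ _ fun q => abs_le_of_mem_Icc_zero (hp01 q.2)⟩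

lemma fst_eq_twoPoint_secondActionProb {z w : α} {p₀ : ℝ} {p : β → ℝ}
    {σ : Kernel (α × β) α} {ν : ℕ → Measure (α × β)} (hν : ∀ t, IsProbabilityMeasure (ν t))
    (hp : Measurable p) (hp01 : ∀ y, p y ∈ Icc 0 1) (hσ : ∀ x y, σ (x, y) = twoPoint z w (p y))
    (h0 : ∀ E, MeasurableSet E → ν 0 (E ×ˢ univ) = twoPoint z w p₀ E)
    (hrec : ∀ t E, MeasurableSet E → ν (t + 1) (E ×ˢ univ) = ∫⁻ q, σ q E ∂ν t) (t : ℕ) :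
    (ν t).fst = twoPoint z w (secondActionProb p₀ p ν t) := by
  ext E hE
  rw [Measure.fst_apply hE, ← prod_univ]
  cases t with
  | zero => exact h0 E hE
  | succ t =>
    rw [hrec t E hE, secondActionProb, ← @lintegral_twoPoint_apply _ _ _ _ _ (hν t)
      (fun q => p q.2) (hp.comp measurable_snd) (fun q => hp01 q.2)]
    exact lintegral_congr fun q => by rw [← hσ q.1 q.2]

end MarkovChain

section DiscountedSum

variable {lam : ℝ}

lemma summable_pow_mul_of_abs_le_s9 {M : ℝ} {u : ℕ → ℝ} (h0 : 0 ≤ lam) (h1 : lam < 1)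
    (hu : ∀ t, |u t| ≤ M) : Summable fun t => lam ^ t * u t :=
  Summable.of_norm_bounded ((summable_geometric_of_lt_one h0 h1).mul_right M) fun t => by
    rw [Real.norm_eq_abs, abs_mul, abs_pow, abs_of_nonneg h0]
    exact mul_le_mul_of_nonneg_left (hu t) (pow_nonneg h0 t)

lemma hasSum_pow_mul_telescope {r : ℕ → ℝ} (hr : Summable fun t => lam ^ t * r t) :
    HasSum (fun t => lam ^ t * (lam * r (t + 1) - r t)) (-r 0) := by
  have hshift : Summable fun t => lam ^ (t + 1) * r (t + 1) := (summable_nat_add_iff 1).2 hr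
  have hsplit := hr.tsum_eq_zero_add
  simp only [pow_zero, one_mul] at hsplit
  have H := hshift.hasSum.sub hr.hasSum
  rw [show ∑' t, lam ^ (t + 1) * r (t + 1) - ∑' t, lam ^ t * r t = -r 0 by linarith] at H
  have hterm : (fun t => lam ^ t * (lam * r (t + 1) - r t))
      = fun t => lam ^ (t + 1) * r (t + 1) - lam ^ t * r t := funext fun t => by ring
  rw [hterm]
  exact H

lemma discounted_sub_mul_eq {χ D e : ℝ} {a b r : ℕ → ℝ} (h0 : 0 ≤ lam) (h1 : lam < 1)
    (ha : Summable fun t => lam ^ t * a t) (hb : Summable fun t => lam ^ t * b t)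
    (hr : Summable fun t => lam ^ t * r t)
    (h : ∀ t, a t - χ * b t = D * (lam * r (t + 1) - r t) + e) :
    (1 - lam) * ∑' t, lam ^ t * a t - χ * ((1 - lam) * ∑' t, lam ^ t * b t)
      = e - (1 - lam) * D * r 0 := by
  have hsum : ∑' t, lam ^ t * a t - χ * ∑' t, lam ^ t * b t = D * -r 0 + e * (1 - lam)⁻¹ := by
    have hterm : (fun t => lam ^ t * a t - χ * (lam ^ t * b t))
        = fun t => D * (lam ^ t * (lam * r (t + 1) - r t)) + e * lam ^ t :=
      funext fun t => by linear_combination lam ^ t * h t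
    refine (ha.hasSum.sub (hb.hasSum.mul_left χ)).unique ?_
    rw [hterm]
    exact ((hasSum_pow_mul_telescope hr).mul_left D).add
      ((hasSum_geometric_of_lt_one h0 h1).mul_left e)
  have h1' : 1 - lam ≠ 0 := by linarith
  field_simp at hsum
  linear_combination hsum

lemma summable_pow_mul_integral_of_abs_le {γ : Type*} [MeasurableSpace γ] {ν : ℕ → Measure γ}
    (hν : ∀ t, IsProbabilityMeasure (ν t)) (h0 : 0 ≤ lam) (h1 : lam < 1) {f : γ → ℝ} {M : ℝ}
    (hf : ∀ q, |f q| ≤ M) : Summable fun t => lam ^ t * ∫ q, f q ∂ν t :=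
  summable_pow_mul_of_abs_le_s9 h0 h1 fun t => @abs_integral_le_of_abs_le _ _ _ (hν t) _ _ hf

end DiscountedSum

section DonationGame

variable {α : Type*} [MeasurableSpace α] {ν : Measure (α × α)} [IsProbabilityMeasure ν]
  {b c : α → ℝ} {z w : α}

lemma integral_payoff_sub_mul_eq [MeasurableSingletonClass α] {r : ℝ} (χ : ℝ)
    (hb : Measurable b) (hc : Measurable c) (hbw : ∀ x, b x ∈ Icc 0 (b w))
    (hcw : ∀ x, c x ∈ Icc 0 (c w)) (hb0 : b z = 0) (hc0 : c z = 0) (hr : r ∈ Icc 0 1)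
    (hfst : ν.fst = twoPoint z w r) :
    ∫ q, (b q.2 - c q.1) ∂ν - χ * ∫ q, (b q.1 - c q.2) ∂ν
      = ∫ q, (b q.2 + χ * c q.2) ∂ν - r * (χ * b w + c w) := by
  have hfst_int {g : α → ℝ} (hg : Measurable g) :
      ∫ q, g q.1 ∂ν = (1 - r) * g z + r * g w := by
    rw [← integral_twoPoint g z w hr, ← hfst, Measure.fst,
      integral_map measurable_fst.aemeasurable hg.aestronglyMeasurable]
  have hint {g : α → ℝ} (hg : Measurable g) (hgw : ∀ x, g x ∈ Icc 0 (g w)) {π : α × α → α}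
      (hπ : Measurable π) : Integrable (fun q => g (π q)) ν :=
    integrable_of_mem_Icc_zero (hg.comp hπ) fun q => hgw (π q)
  rw [integral_sub (hint hb hbw measurable_snd) (hint hc hcw measurable_fst),
    integral_sub (hint hb hbw measurable_fst) (hint hc hcw measurable_snd),
    integral_add (hint hb hbw measurable_snd) ((hint hc hcw measurable_snd).const_mul χ),
    integral_const_mul, hfst_int hb, hfst_int hc, hb0, hc0]
  ring

lemma mul_integral_eq_of_affine {γ : Type*} [MeasurableSpace γ] {μ : Measure γ}
    [IsProbabilityMeasure μ] {f g : γ → ℝ} {lam D k m : ℝ} (hf : Integrable f μ)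
    (hlam : lam ≠ 0) (hD : D ≠ 0) (hg : ∀ x, g x = 1 / lam * ((f x + k) / D - m)) :
    D * (lam * ∫ x, g x ∂μ) = ∫ x, f x ∂μ + k - D * m := by
  have hfk : Integrable (fun x => f x + k) μ := hf.add (integrable_const k)
  rw [funext hg, integral_const_mul, integral_sub (hfk.div_const D) (integrable_const m),
    integral_div, integral_add hf (integrable_const k),
    integral_const, integral_const, probReal_univ, one_smul, one_smul]
  field_simp

lemma integral_payoff_sub_mul_eq_of_reaction [MeasurableSingletonClass α] {p : α → ℝ}
    {r χ κ lam p₀ : ℝ} (hb : Measurable b) (hc : Measurable c) (hbw : ∀ x, b x ∈ Icc 0 (b w))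
    (hcw : ∀ x, c x ∈ Icc 0 (c w)) (hb0 : b z = 0) (hc0 : c z = 0) (hr : r ∈ Icc 0 1)
    (hfst : ν.fst = twoPoint z w r) (hlam : lam ≠ 0) (hD : χ * b w + c w ≠ 0)
    (hp : ∀ y, p y = 1 / lam *
      ((b y + χ * c y + (χ - 1) * κ) / (χ * b w + c w) - (1 - lam) * p₀)) :
    ∫ q, (b q.2 - c q.1) ∂ν - χ * ∫ q, (b q.1 - c q.2) ∂ν
      = (χ * b w + c w) * (lam * ∫ q, p q.2 ∂ν - r)
        + ((χ * b w + c w) * ((1 - lam) * p₀) - (χ - 1) * κ) := by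
  have hint : Integrable (fun q : α × α => b q.2 + χ * c q.2) ν :=
    (integrable_of_mem_Icc_zero (hb.comp measurable_snd) fun q => hbw q.2).add
      ((integrable_of_mem_Icc_zero (hc.comp measurable_snd) fun q => hcw q.2).const_mul χ)
  rw [integral_payoff_sub_mul_eq χ hb hc hbw hcw hb0 hc0 hr hfst]
  linear_combination -mul_integral_eq_of_affine (g := fun q => p q.2) hint hlam hD
    fun q => hp q.2

lemma reaction_mem_Icc {B C Bt Ct χ κ lam p₀ : ℝ} (hB : B ∈ Icc 0 Bt) (hC : C ∈ Icc 0 Ct)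
    (hχ : 0 ≤ χ) (hlam : lam ∈ Ioo 0 1) (hD : 0 < χ * Bt + Ct)
    (hp₀l : ((χ - 1) * κ - lam * (χ * Bt + Ct) + (Bt + χ * Ct)) / ((1 - lam) * (χ * Bt + Ct))
      ≤ p₀)
    (hp₀u : p₀ ≤ (χ - 1) * κ / ((1 - lam) * (χ * Bt + Ct))) :
    1 / lam * ((B + χ * C + (χ - 1) * κ) / (χ * Bt + Ct) - (1 - lam) * p₀) ∈ Icc 0 1 := by
  have hD' : 0 < (1 - lam) * (χ * Bt + Ct) := mul_pos (by linarith [hlam.2]) hD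
  rw [div_le_iff₀ hD'] at hp₀l
  rw [le_div_iff₀ hD'] at hp₀u
  constructor
  · refine mul_nonneg (one_div_nonneg.2 hlam.1.le) (sub_nonneg.2 ?_)
    rw [le_div_iff₀ hD]
    nlinarith [hB.1, hC.1]
  · rw [one_div, inv_mul_le_iff₀ hlam.1, mul_one, sub_le_iff_le_add, div_le_iff₀ hD]
    nlinarith [hB.2, hC.2]

end DonationGame

lemma mem_Icc_of_monotone {K : ℝ} {f : Icc (0 : ℝ) K → ℝ} (hf : Monotone f)
    {zero top : Icc (0 : ℝ) K} (hzero : (zero : ℝ) = 0) (htop : (top : ℝ) = K)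
    (y : Icc (0 : ℝ) K) : f y ∈ Icc (f zero) (f top) :=
  ⟨hf (Subtype.coe_le_coe.1 (by rw [hzero]; exact y.2.1)),
    hf (Subtype.coe_le_coe.1 (by rw [htop]; exact y.2.2))⟩

theorem donation_two_point_extortion_general
    (K : ℝ) (hK : 0 < K)
    (b c : Set.Icc (0 : ℝ) K → ℝ) (hbm : Monotone b) (hcm : Monotone c)
    (hbmeas : Measurable b) (hcmeas : Measurable c)
    (zero top : Set.Icc (0 : ℝ) K) (hzero : (zero : ℝ) = 0) (htop : (top : ℝ) = K)
    (hb0 : b zero = 0) (hc0 : c zero = 0)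
    (hbc : ∀ s : Set.Icc (0 : ℝ) K, 0 < (s : ℝ) → c s < b s)
    (χ : ℝ) (hχ : 1 ≤ χ) (κ : ℝ)
    (lam : ℝ) (hlam : lam ∈ Set.Ioo (0 : ℝ) 1)
    (p₀ : ℝ) (hp₀ : p₀ ∈ Set.Icc (0 : ℝ) 1)
    (hp₀l : max (((χ - 1) * κ - lam * (χ * b top + c top) + (b top + χ * c top))
        / ((1 - lam) * (χ * b top + c top))) 0 ≤ p₀)
    (hp₀u : p₀ ≤ min (((χ - 1) * κ) / ((1 - lam) * (χ * b top + c top))) 1)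
    (p : Set.Icc (0 : ℝ) K → ℝ)
    (hp : ∀ y, p y = (1 / lam) *
      ((b y + χ * c y + (χ - 1) * κ) / (χ * b top + c top) - (1 - lam) * p₀))
    (σX : Kernel (Set.Icc (0 : ℝ) K × Set.Icc (0 : ℝ) K) (Set.Icc (0 : ℝ) K))
    (hσX : ∀ x y, σX (x, y) =
      ENNReal.ofReal (1 - p y) • Measure.dirac zero
        + ENNReal.ofReal (p y) • Measure.dirac top)
    (σ0 : Measure (Set.Icc (0 : ℝ) K))
    (hσ0 : σ0 = ENNReal.ofReal (1 - p₀) • Measure.dirac zero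
        + ENNReal.ofReal p₀ • Measure.dirac top) :
    (∀ y, 0 ≤ p y ∧ p y ≤ 1) ∧
    (∀ ν : ℕ → Measure (Set.Icc (0 : ℝ) K × Set.Icc (0 : ℝ) K),
      (∀ t, IsProbabilityMeasure (ν t)) →
      (∀ E : Set (Set.Icc (0 : ℝ) K), MeasurableSet E →
        ν 0 (E ×ˢ Set.univ) = σ0 E) →
      (∀ t : ℕ, ∀ E : Set (Set.Icc (0 : ℝ) K), MeasurableSet E →
        ν (t + 1) (E ×ˢ Set.univ) = ∫⁻ q, σX q E ∂ ν t) →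
      ((1 - lam) * ∑' t : ℕ, lam ^ t * ∫ q, (b q.2 - c q.1) ∂ ν t) - κ
        = χ * (((1 - lam) * ∑' t : ℕ, lam ^ t * ∫ q, (b q.1 - c q.2) ∂ ν t) - κ)) := by
  have hb (y) : b y ∈ Icc 0 (b top) := hb0 ▸ mem_Icc_of_monotone hbm hzero htop y
  have hc (y) : c y ∈ Icc 0 (c top) := hc0 ▸ mem_Icc_of_monotone hcm hzero htop y
  have hD : 0 < χ * b top + c top := by nlinarith [hbc top (htop.symm ▸ hK), (hc top).1]
  have hp01 (y) : p y ∈ Icc 0 1 := by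
    rw [hp]
    exact reaction_mem_Icc (hb y) (hc y) (by linarith) hlam hD (le_of_max_le_left hp₀l)
      (le_of_le_min_left hp₀u)
  refine ⟨hp01, fun ν hν h0 hrec => ?_⟩
  subst hσ0
  have hpm : Measurable p := by rw [funext hp]; fun_prop
  have hr01 := secondActionProb_mem_Icc hν hp₀ hp01
  have hround (t : ℕ) := haveI := hν t
    integral_payoff_sub_mul_eq_of_reaction hbmeas hcmeas hb hc hb0 hc0 (hr01 t)
    (fst_eq_twoPoint_secondActionProb hν hpm hp01 hσX h0 hrec t) hlam.1.ne' hD.ne' hp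
  have hbound {x y} : |b x - c y| ≤ b top + c top := (abs_sub _ _).trans
    (add_le_add (abs_le_of_mem_Icc_zero (hb x)) (abs_le_of_mem_Icc_zero (hc y)))
  have hr0 : secondActionProb p₀ p ν 0 = p₀ := rfl
  linear_combination discounted_sub_mul_eq hlam.1.le hlam.2
    (summable_pow_mul_integral_of_abs_le hν hlam.1.le hlam.2 fun q => hbound)
    (summable_pow_mul_integral_of_abs_le hν hlam.1.le hlam.2 fun q => hbound)
    (summable_pow_mul_of_abs_le_s9 hlam.1.le hlam.2 fun t => abs_le_of_mem_Icc_zero (hr01 t))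
    hround - (1 - lam) * (χ * b top + c top) * hr0

/-- **Two-point extortionate/generous strategies in the continuous Donation Game.**
With action space `[0,K]`, nondecreasing benefit/cost functions `b, c` with
`b(0)=c(0)=0` and `b(s) > c(s)` for `s > 0`, payoffs `u_X(x,y) = b(y) − c(x)` and
`u_Y(x,y) = b(x) − c(y)`: for `χ ≥ 1`, `0 ≤ κ ≤ b(K) − c(K)`, a discount factor
`lam ≥ (b(K)+χc(K))/(χb(K)+c(K))`, and a feasible initial cooperation probability
`p₀`, the reaction probability
`p(y) = (1/lam)((b(y)+χc(y)+(χ−1)κ)/(χb(K)+c(K)) − (1−lam)p₀)` lies in `[0,1]`,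
and the two-point strategy `σX[x,y] = (1−p(y))·δ₀ + p(y)·δ_K` with initial action
`(1−p₀)·δ₀ + p₀·δ_K` enforces `π_X − κ = χ(π_Y − κ)`. -/
theorem donation_two_point_extortion
    (K : ℝ) (hK : 0 < K)
    (b c : Set.Icc (0 : ℝ) K → ℝ) (hbm : Monotone b) (hcm : Monotone c)
    (hbmeas : Measurable b) (hcmeas : Measurable c)
    (zero top : Set.Icc (0 : ℝ) K) (hzero : (zero : ℝ) = 0) (htop : (top : ℝ) = K)
    (hb0 : b zero = 0) (hc0 : c zero = 0)
    (hbc : ∀ s : Set.Icc (0 : ℝ) K, 0 < (s : ℝ) → c s < b s)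
    (χ : ℝ) (hχ : 1 ≤ χ) (κ : ℝ) (hκ : 0 ≤ κ ∧ κ ≤ b top - c top)
    (lam : ℝ) (hlam : lam ∈ Set.Ioo (0 : ℝ) 1)
    (hlam' : (b top + χ * c top) / (χ * b top + c top) ≤ lam)
    (p₀ : ℝ) (hp₀ : p₀ ∈ Set.Icc (0 : ℝ) 1)
    (hp₀l : max (((χ - 1) * κ - lam * (χ * b top + c top) + (b top + χ * c top))
        / ((1 - lam) * (χ * b top + c top))) 0 ≤ p₀)
    (hp₀u : p₀ ≤ min (((χ - 1) * κ) / ((1 - lam) * (χ * b top + c top))) 1)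
    (p : Set.Icc (0 : ℝ) K → ℝ)
    (hp : ∀ y, p y = (1 / lam) *
      ((b y + χ * c y + (χ - 1) * κ) / (χ * b top + c top) - (1 - lam) * p₀))
    (σX : Kernel (Set.Icc (0 : ℝ) K × Set.Icc (0 : ℝ) K) (Set.Icc (0 : ℝ) K))
    (hσX : ∀ x y, σX (x, y) =
      ENNReal.ofReal (1 - p y) • Measure.dirac zero
        + ENNReal.ofReal (p y) • Measure.dirac top)
    (σ0 : Measure (Set.Icc (0 : ℝ) K))
    (hσ0 : σ0 = ENNReal.ofReal (1 - p₀) • Measure.dirac zero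
        + ENNReal.ofReal p₀ • Measure.dirac top) :
    (∀ y, 0 ≤ p y ∧ p y ≤ 1) ∧
    (∀ ν : ℕ → Measure (Set.Icc (0 : ℝ) K × Set.Icc (0 : ℝ) K),
      (∀ t, IsProbabilityMeasure (ν t)) →
      (∀ E : Set (Set.Icc (0 : ℝ) K), MeasurableSet E →
        ν 0 (E ×ˢ Set.univ) = σ0 E) →
      (∀ t : ℕ, ∀ E : Set (Set.Icc (0 : ℝ) K), MeasurableSet E →
        ν (t + 1) (E ×ˢ Set.univ) = ∫⁻ q, σX q E ∂ ν t) →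
      ((1 - lam) * ∑' t : ℕ, lam ^ t * ∫ q, (b q.2 - c q.1) ∂ ν t) - κ
        = χ * (((1 - lam) * ∑' t : ℕ, lam ^ t * ∫ q, (b q.1 - c q.2) ∂ ν t) - κ)) :=
  donation_two_point_extortion_general K hK b c hbm hcm hbmeas hcmeas zero top hzero htop hb0 hc0
    hbc χ hχ κ lam hlam p₀ hp₀ hp₀l hp₀u p hp σX hσX σ0 hσ0
end

section
/- Necessary range of the baseline payoff for extortion in the continuous Donation Game: In the continuous Donation Game, let χ > 1, κ ∈ ℝ, and λ ∈ (0,1]. Suppose there exist a bounded measurable function ψ : [0,K] → ℝ, a memory-one strategy σ_X, and an initial action σ_X^0 such that for every x, y ∈ [0,K]: (u_X(x,y) − κ) − χ·(u_Y(x,y) − κ) = ψ(x) − λ·∫ ψ(s) dσ_X[x,y](s) − (1−λ)·∫ ψ(s) dσ_X^0(s). Then 0 ≤ κ ≤ b(K) − c(K). -/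
/-!
Write `m ≤ ψ ≤ S` for the bounds of `ψ`. The right-hand side of the Press–Dyson relation is
`ψ x` minus a convex combination of averages of `ψ`, so it lies in `[ψ x - S, ψ x - m]`.
Against the opponent's action `0` the left-hand side is at most `κ (χ - 1)`, so
`ψ x ≤ κ (χ - 1) + S` for every `x`, and taking the supremum forces `κ ≥ 0`. Against the
action `K` it is at least `(χ - 1) (κ - (b K - c K))`, and taking the infimum of `ψ` forces
`κ ≤ b K - c K`.
-/

open MeasureTheory ProbabilityTheory

section SupremumArgument

variable {α : Type*} [Nonempty α] {ψ a : α → ℝ} {d : ℝ}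

theorem nonneg_of_forall_sub_le_of_le_ciSup (ha : ∀ x, a x ≤ ⨆ s, ψ s)
    (h : ∀ x, ψ x - a x ≤ d) : 0 ≤ d := by
  have : (⨆ s, ψ s) ≤ d + ⨆ s, ψ s := ciSup_le fun x => by linarith [h x, ha x]
  linarith

theorem nonpos_of_forall_le_sub_of_ciInf_le (ha : ∀ x, (⨅ s, ψ s) ≤ a x)
    (h : ∀ x, d ≤ ψ x - a x) : d ≤ 0 := by
  have : d + (⨅ s, ψ s) ≤ ⨅ s, ψ s := le_ciInf fun x => by linarith [h x, ha x]
  linarith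

end SupremumArgument

section IntegralBounds

variable {α : Type*} [MeasurableSpace α] {ψ : α → ℝ} {lam : ℝ}

theorem integral_le_ciSup (μ : Measure α) [IsProbabilityMeasure μ]
    (hψ : BddAbove (Set.range ψ)) (hint : Integrable ψ μ) :
    ∫ s, ψ s ∂μ ≤ ⨆ s, ψ s := by
  have : Nonempty α := nonempty_of_isProbabilityMeasure μ
  calc ∫ s, ψ s ∂μ ≤ ∫ _, (⨆ s, ψ s) ∂μ :=
        integral_mono hint (integrable_const _) (le_ciSup hψ)
    _ = ⨆ s, ψ s := by simp

theorem ciInf_le_integral (μ : Measure α) [IsProbabilityMeasure μ]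
    (hψ : BddBelow (Set.range ψ)) (hint : Integrable ψ μ) :
    ⨅ s, ψ s ≤ ∫ s, ψ s ∂μ := by
  have : Nonempty α := nonempty_of_isProbabilityMeasure μ
  calc ⨅ s, ψ s = ∫ _, (⨅ s, ψ s) ∂μ := by simp
    _ ≤ ∫ s, ψ s ∂μ := integral_mono (integrable_const _) hint (ciInf_le hψ)

variable (μ ν : Measure α) [IsProbabilityMeasure μ] [IsProbabilityMeasure ν]

theorem convex_comb_integral_le_ciSup (hψ : BddAbove (Set.range ψ))
    (hμ : Integrable ψ μ) (hν : Integrable ψ ν) (hlam : lam ∈ Set.Icc (0 : ℝ) 1) :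
    lam * ∫ s, ψ s ∂μ + (1 - lam) * ∫ s, ψ s ∂ν ≤ ⨆ s, ψ s := by
  have hμS := integral_le_ciSup μ hψ hμ
  have hνS := integral_le_ciSup ν hψ hν
  nlinarith [hlam.1, hlam.2]

theorem ciInf_le_convex_comb_integral (hψ : BddBelow (Set.range ψ))
    (hμ : Integrable ψ μ) (hν : Integrable ψ ν) (hlam : lam ∈ Set.Icc (0 : ℝ) 1) :
    ⨅ s, ψ s ≤ lam * ∫ s, ψ s ∂μ + (1 - lam) * ∫ s, ψ s ∂ν := by
  have hmμ := ciInf_le_integral μ hψ hμ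
  have hmν := ciInf_le_integral ν hψ hν
  nlinarith [hlam.1, hlam.2]

end IntegralBounds

section DonationPayoffs

variable {α : Type*} [Preorder α] {b c : α → ℝ} {χ : ℝ} (κ : ℝ)

theorem extortion_payoff_le_of_bot (hb : Monotone b) (hc : Monotone c) {z x : α} (hzx : z ≤ x)
    (hb0 : b z = 0) (hc0 : c z = 0) (hχ : 0 ≤ χ) :
    ((b z - c x) - κ) - χ * ((b x - c z) - κ) ≤ κ * (χ - 1) := by
  have hbx : 0 ≤ b x := hb0 ▸ hb hzx
  have hcx : 0 ≤ c x := hc0 ▸ hc hzx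
  nlinarith

theorem le_extortion_payoff_of_top (hb : Monotone b) (hc : Monotone c) {x t : α} (hxt : x ≤ t)
    (hχ : 0 ≤ χ) :
    (χ - 1) * (κ - (b t - c t)) ≤ ((b t - c x) - κ) - χ * ((b x - c t) - κ) := by
  have hbx := hb hxt
  have hcx := hc hxt
  nlinarith

end DonationPayoffs

theorem donation_extortion_baseline_range_general
    (K : ℝ)
    (b c : Set.Icc (0 : ℝ) K → ℝ) (hbm : Monotone b) (hcm : Monotone c)
    (zero top : Set.Icc (0 : ℝ) K) (hzero : (zero : ℝ) = 0) (htop : (top : ℝ) = K)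
    (hb0 : b zero = 0) (hc0 : c zero = 0)
    (χ : ℝ) (hχ : 1 < χ) (κ : ℝ)
    (lam : ℝ) (hlam : lam ∈ Set.Ioc (0 : ℝ) 1)
    (ψ : Set.Icc (0 : ℝ) K → ℝ) (hψm : Measurable ψ) (Cψ : ℝ) (hψb : ∀ s, |ψ s| ≤ Cψ)
    (σX : Kernel (Set.Icc (0 : ℝ) K × Set.Icc (0 : ℝ) K) (Set.Icc (0 : ℝ) K))
    [IsMarkovKernel σX]
    (σ0 : Measure (Set.Icc (0 : ℝ) K)) [IsProbabilityMeasure σ0]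
    (hPD : ∀ x y : Set.Icc (0 : ℝ) K,
      ((b y - c x) - κ) - χ * ((b x - c y) - κ) =
        ψ x - lam * ∫ s, ψ s ∂ (σX (x, y)) - (1 - lam) * ∫ s, ψ s ∂ σ0) :
    0 ≤ κ ∧ κ ≤ b top - c top := by
  have : Nonempty (Set.Icc (0 : ℝ) K) := ⟨zero⟩
  have hlam' : lam ∈ Set.Icc (0 : ℝ) 1 := Set.Ioc_subset_Icc_self hlam
  have hχ0 : 0 ≤ χ := by linarith
  have hψ_above : BddAbove (Set.range ψ) :=
    ⟨Cψ, by rintro _ ⟨s, rfl⟩; exact (abs_le.1 (hψb s)).2⟩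
  have hψ_below : BddBelow (Set.range ψ) :=
    ⟨-Cψ, by rintro _ ⟨s, rfl⟩; exact (abs_le.1 (hψb s)).1⟩
  have hint (μ : Measure (Set.Icc (0 : ℝ) K)) [IsProbabilityMeasure μ] : Integrable ψ μ :=
    .of_bound hψm.aestronglyMeasurable Cψ (ae_of_all _ hψb)
  have hzx (x : Set.Icc (0 : ℝ) K) : zero ≤ x := by
    rw [← Subtype.coe_le_coe, hzero]; exact x.2.1
  have hxt (x : Set.Icc (0 : ℝ) K) : x ≤ top := by
    rw [← Subtype.coe_le_coe, htop]; exact x.2.2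
  constructor
  · have h := nonneg_of_forall_sub_le_of_le_ciSup (ψ := ψ) (d := κ * (χ - 1))
      (fun x => convex_comb_integral_le_ciSup (σX (x, zero)) σ0 hψ_above (hint _) (hint _) hlam')
      fun x => by linarith [hPD x zero, extortion_payoff_le_of_bot κ hbm hcm (hzx x) hb0 hc0 hχ0]
    exact (mul_nonneg_iff_of_pos_right (sub_pos.2 hχ)).1 h
  · have h := nonpos_of_forall_le_sub_of_ciInf_le (ψ := ψ)
      (d := (χ - 1) * (κ - (b top - c top)))
      (fun x => ciInf_le_convex_comb_integral (σX (x, top)) σ0 hψ_below (hint _) (hint _) hlam')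
      fun x => by linarith [hPD x top, le_extortion_payoff_of_top κ hbm hcm (hxt x) hχ0]
    exact sub_nonpos.1 (nonpos_of_mul_nonpos_right h (sub_pos.2 hχ))

/-- **Necessary range of the baseline payoff for extortion in the continuous Donation
Game.** If for `χ > 1` some bounded measurable `ψ`, memory-one strategy `σX`, and
initial action `σ0` satisfy the Press–Dyson relation
`(u_X(x,y) − κ) − χ(u_Y(x,y) − κ) = ψ(x) − lam·∫ ψ dσX[x,y] − (1−lam)·∫ ψ dσ0`
for all `x, y ∈ [0,K]`, then `0 ≤ κ ≤ b(K) − c(K)`. -/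
theorem donation_extortion_baseline_range
    (K : ℝ) (hK : 0 < K)
    (b c : Set.Icc (0 : ℝ) K → ℝ) (hbm : Monotone b) (hcm : Monotone c)
    (hbmeas : Measurable b) (hcmeas : Measurable c)
    (zero top : Set.Icc (0 : ℝ) K) (hzero : (zero : ℝ) = 0) (htop : (top : ℝ) = K)
    (hb0 : b zero = 0) (hc0 : c zero = 0)
    (hbc : ∀ s : Set.Icc (0 : ℝ) K, 0 < (s : ℝ) → c s < b s)
    (χ : ℝ) (hχ : 1 < χ) (κ : ℝ)
    (lam : ℝ) (hlam : lam ∈ Set.Ioc (0 : ℝ) 1)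
    (ψ : Set.Icc (0 : ℝ) K → ℝ) (hψm : Measurable ψ) (Cψ : ℝ) (hψb : ∀ s, |ψ s| ≤ Cψ)
    (σX : Kernel (Set.Icc (0 : ℝ) K × Set.Icc (0 : ℝ) K) (Set.Icc (0 : ℝ) K))
    [IsMarkovKernel σX]
    (σ0 : Measure (Set.Icc (0 : ℝ) K)) [IsProbabilityMeasure σ0]
    (hPD : ∀ x y : Set.Icc (0 : ℝ) K,
      ((b y - c x) - κ) - χ * ((b x - c y) - κ) =
        ψ x - lam * ∫ s, ψ s ∂ (σX (x, y)) - (1 - lam) * ∫ s, ψ s ∂ σ0) :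
    0 ≤ κ ∧ κ ≤ b top - c top :=
  donation_extortion_baseline_range_general K b c hbm hcm zero top hzero htop hb0 hc0 χ hχ κ lam
    hlam ψ hψm Cψ hψb σX σ0 hPD
end

section
/- Necessary range of the opponent's payoff for equalizer strategies in the continuous Donation Game: In the continuous Donation Game, let γ ∈ ℝ and λ ∈ (0,1]. Suppose there exist a bounded measurable function ψ : [0,K] → ℝ, a memory-one strategy σ_X, and an initial action σ_X^0 such that for every x, y ∈ [0,K]: u_Y(x,y) − γ = ψ(x) − λ·∫ ψ(s) dσ_X[x,y](s) − (1−λ)·∫ ψ(s) dσ_X^0(s). Then 0 ≤ γ ≤ b(K) − c(K). -/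
/-!
Every average of `ψ` lies between `inf ψ` and `sup ψ`, so the identity forces
`inf ψ + (u_Y(x,y) − γ) ≤ ψ x ≤ sup ψ + (u_Y(x,y) − γ)` for all `x`. At `y = 0` the payoff
term is `b(x) − γ ≥ −γ`, hence `γ ≥ 0`; at `y = K` it is at most `b(K) − c(K) − γ`, hence
`γ ≤ b(K) − c(K)`.
-/

open MeasureTheory ProbabilityTheory

section MixedAverage

variable {α : Type*} [MeasurableSpace α] {ψ : α → ℝ} {C lam ε : ℝ}

lemma iInf_le_integral_of_forall_abs_le (μ : Measure α) [IsProbabilityMeasure μ]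
    (hψm : Measurable ψ) (hψb : ∀ s, |ψ s| ≤ C) : ⨅ s, ψ s ≤ ∫ s, ψ s ∂μ := by
  have hbdd : BddBelow (Set.range ψ) :=
    ⟨-C, Set.forall_mem_range.mpr fun s => (abs_le.mp (hψb s)).1⟩
  calc ⨅ s, ψ s = ∫ _, ⨅ s, ψ s ∂μ := by simp
    _ ≤ ∫ s, ψ s ∂μ :=
      integral_mono (integrable_const _) (.of_bound hψm.aestronglyMeasurable C (.of_forall hψb))
        fun s => ciInf_le hbdd s

lemma nonpos_of_forall_le_sub_mixedAverage (hψm : Measurable ψ) (hψb : ∀ s, |ψ s| ≤ C)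
    (ν : α → Measure α) [∀ x, IsProbabilityMeasure (ν x)] (μ : Measure α)
    [IsProbabilityMeasure μ] (hlam : lam ∈ Set.Icc (0 : ℝ) 1)
    (h : ∀ x, ε ≤ ψ x - lam * ∫ s, ψ s ∂ν x - (1 - lam) * ∫ s, ψ s ∂μ) : ε ≤ 0 := by
  have := nonempty_of_isProbabilityMeasure μ
  set m := ⨅ s, ψ s
  have hmμ := iInf_le_integral_of_forall_abs_le μ hψm hψb
  have hψ_ge : ∀ x, ε + m ≤ ψ x := fun x => by
    have hmν := iInf_le_integral_of_forall_abs_le (ν x) hψm hψb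
    nlinarith [h x, hlam.1, hlam.2]
  linarith [le_ciInf hψ_ge]

lemma nonneg_of_forall_sub_mixedAverage_le (hψm : Measurable ψ) (hψb : ∀ s, |ψ s| ≤ C)
    (ν : α → Measure α) [∀ x, IsProbabilityMeasure (ν x)] (μ : Measure α)
    [IsProbabilityMeasure μ] (hlam : lam ∈ Set.Icc (0 : ℝ) 1)
    (h : ∀ x, ψ x - lam * ∫ s, ψ s ∂ν x - (1 - lam) * ∫ s, ψ s ∂μ ≤ ε) : 0 ≤ ε := by
  have := nonpos_of_forall_le_sub_mixedAverage (ψ := fun s => -ψ s) (ε := -ε) hψm.neg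
    (by simpa only [abs_neg] using hψb) ν μ hlam fun x => by
      simp only [integral_neg]
      linarith [h x]
  linarith

end MixedAverage

theorem donation_equalizer_payoff_range_general
    (K : ℝ)
    (b c : Set.Icc (0 : ℝ) K → ℝ) (hbm : Monotone b)
    (zero top : Set.Icc (0 : ℝ) K) (hzero : (zero : ℝ) = 0) (htop : (top : ℝ) = K)
    (hb0 : b zero = 0) (hc0 : c zero = 0)
    (γ : ℝ) (lam : ℝ) (hlam : lam ∈ Set.Ioc (0 : ℝ) 1)
    (ψ : Set.Icc (0 : ℝ) K → ℝ) (hψm : Measurable ψ) (Cψ : ℝ) (hψb : ∀ s, |ψ s| ≤ Cψ)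
    (σX : Kernel (Set.Icc (0 : ℝ) K × Set.Icc (0 : ℝ) K) (Set.Icc (0 : ℝ) K))
    [IsMarkovKernel σX]
    (σ0 : Measure (Set.Icc (0 : ℝ) K)) [IsProbabilityMeasure σ0]
    (hPD : ∀ x y : Set.Icc (0 : ℝ) K,
      (b x - c y) - γ =
        ψ x - lam * ∫ s, ψ s ∂ (σX (x, y)) - (1 - lam) * ∫ s, ψ s ∂ σ0) :
    0 ≤ γ ∧ γ ≤ b top - c top := by
  have hlam' : lam ∈ Set.Icc (0 : ℝ) 1 := Set.Ioc_subset_Icc_self hlam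
  have hzero_le (x : Set.Icc (0 : ℝ) K) : zero ≤ x :=
    Subtype.coe_le_coe.mp (by rw [hzero]; exact x.2.1)
  have hle_top (x : Set.Icc (0 : ℝ) K) : x ≤ top :=
    Subtype.coe_le_coe.mp (by rw [htop]; exact x.2.2)
  constructor
  · have := nonpos_of_forall_le_sub_mixedAverage (ε := -γ) hψm hψb (fun x => σX (x, zero)) σ0
      hlam' fun x => by linarith [hPD x zero, hb0 ▸ hbm (hzero_le x)]
    linarith
  · have := nonneg_of_forall_sub_mixedAverage_le (ε := b top - c top - γ) hψm hψb
      (fun x => σX (x, top)) σ0 hlam' fun x => by linarith [hPD x top, hbm (hle_top x)]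
    linarith

/-- **Necessary range of the opponent's payoff for equalizer strategies in the
continuous Donation Game.** If some bounded measurable `ψ`, memory-one strategy
`σX`, and initial action `σ0` satisfy
`u_Y(x,y) − γ = ψ(x) − lam·∫ ψ dσX[x,y] − (1−lam)·∫ ψ dσ0` for all
`x, y ∈ [0,K]`, then `0 ≤ γ ≤ b(K) − c(K)`. -/
theorem donation_equalizer_payoff_range
    (K : ℝ) (hK : 0 < K)
    (b c : Set.Icc (0 : ℝ) K → ℝ) (hbm : Monotone b) (hcm : Monotone c)
    (hbmeas : Measurable b) (hcmeas : Measurable c)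
    (zero top : Set.Icc (0 : ℝ) K) (hzero : (zero : ℝ) = 0) (htop : (top : ℝ) = K)
    (hb0 : b zero = 0) (hc0 : c zero = 0)
    (hbc : ∀ s : Set.Icc (0 : ℝ) K, 0 < (s : ℝ) → c s < b s)
    (γ : ℝ) (lam : ℝ) (hlam : lam ∈ Set.Ioc (0 : ℝ) 1)
    (ψ : Set.Icc (0 : ℝ) K → ℝ) (hψm : Measurable ψ) (Cψ : ℝ) (hψb : ∀ s, |ψ s| ≤ Cψ)
    (σX : Kernel (Set.Icc (0 : ℝ) K × Set.Icc (0 : ℝ) K) (Set.Icc (0 : ℝ) K))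
    [IsMarkovKernel σX]
    (σ0 : Measure (Set.Icc (0 : ℝ) K)) [IsProbabilityMeasure σ0]
    (hPD : ∀ x y : Set.Icc (0 : ℝ) K,
      (b x - c y) - γ =
        ψ x - lam * ∫ s, ψ s ∂ (σX (x, y)) - (1 - lam) * ∫ s, ψ s ∂ σ0) :
    0 ≤ γ ∧ γ ≤ b top - c top :=
  donation_equalizer_payoff_range_general K b c hbm zero top hzero htop hb0 hc0 γ lam hlam ψ hψm Cψ
    hψb σX σ0 hPD
end

section
/- Impossibility of self-equalizing strategies in the continuous Donation Game: In the continuous Donation Game, for every γ ∈ ℝ and every λ ∈ (0,1], there do NOT exist a bounded measurable function ψ : [0,K] → ℝ, a memory-one strategy σ_X, and an initial action σ_X^0 such that for every x, y ∈ [0,K]: u_X(x,y) − γ = ψ(x) − λ·∫ ψ(s) dσ_X[x,y](s) − (1−λ)·∫ ψ(s) dσ_X^0(s). In other words, player X cannot unilaterally set her own payoff via a Press–Dyson function. -/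
/-!
If `ψ x - lam ∫ ψ dσX[x,y] - (1 - lam) ∫ ψ dσ0 = u_X(x,y) - γ`, the subtracted average lies
between `inf ψ` and `sup ψ`; taking the supremum (resp. infimum) over `x` for a fixed `y` forces
`inf_x u_X(x,y) ≤ γ ≤ sup_x u_X(x,y)`. Against `y = 0` this gives `γ ≤ 0`, against `y = K` it gives
`γ ≥ b(K) - c(K) > 0`.
-/

open MeasureTheory ProbabilityTheory Set

lemma integral_mem_Icc_ciInf_ciSup {α : Type*} [MeasurableSpace α] {μ : Measure α}
    [IsProbabilityMeasure μ] {ψ : α → ℝ} (hψ : Integrable ψ μ) (hbdd : BddAbove (range ψ))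
    (hbdd' : BddBelow (range ψ)) :
    ∫ s, ψ s ∂μ ∈ Icc (⨅ s, ψ s) (⨆ s, ψ s) := by
  constructor
  · simpa using integral_mono (integrable_const _) hψ fun s ↦ ciInf_le hbdd' s
  · simpa using integral_mono hψ (integrable_const _) fun s ↦ le_ciSup hbdd s

section PressDyson

variable {α : Type*} [MeasurableSpace α] {ψ u : α → ℝ} {C lam γ B : ℝ}
  {ν : α → Measure α} [∀ x, IsProbabilityMeasure (ν x)] {μ : Measure α} [IsProbabilityMeasure μ]

lemma mix_integral_mem_Icc_ciInf_ciSup (hψ : Measurable ψ) (hC : ∀ s, |ψ s| ≤ C)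
    (hlam : lam ∈ Icc (0 : ℝ) 1) (μ' : Measure α) [IsProbabilityMeasure μ'] :
    lam * ∫ s, ψ s ∂μ' + (1 - lam) * ∫ s, ψ s ∂μ ∈ Icc (⨅ s, ψ s) (⨆ s, ψ s) := by
  have hbdd : BddAbove (range ψ) := ⟨C, by rintro _ ⟨s, rfl⟩; exact (abs_le.1 (hC s)).2⟩
  have hbdd' : BddBelow (range ψ) := ⟨-C, by rintro _ ⟨s, rfl⟩; exact (abs_le.1 (hC s)).1⟩
  have hint (ρ : Measure α) [IsProbabilityMeasure ρ] : Integrable ψ ρ :=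
    .of_bound hψ.aestronglyMeasurable C (.of_forall hC)
  exact convex_Icc _ _ (integral_mem_Icc_ciInf_ciSup (hint μ') hbdd hbdd')
    (integral_mem_Icc_ciInf_ciSup (hint μ) hbdd hbdd') hlam.1 (sub_nonneg.2 hlam.2)
    (add_sub_cancel _ _)

lemma le_of_pressDyson_eq_of_forall_le (hψ : Measurable ψ) (hC : ∀ s, |ψ s| ≤ C)
    (hlam : lam ∈ Icc (0 : ℝ) 1)
    (h : ∀ x, u x - γ = ψ x - lam * ∫ s, ψ s ∂ν x - (1 - lam) * ∫ s, ψ s ∂μ)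
    (hB : ∀ x, u x ≤ B) : γ ≤ B := by
  have := nonempty_of_isProbabilityMeasure μ
  suffices ⨆ s, ψ s ≤ B - γ + ⨆ s, ψ s by linarith
  refine ciSup_le fun x ↦ ?_
  have := (mix_integral_mem_Icc_ciInf_ciSup hψ hC hlam (μ := μ) (ν x)).2
  linarith [h x, hB x]

lemma ge_of_pressDyson_eq_of_forall_ge (hψ : Measurable ψ) (hC : ∀ s, |ψ s| ≤ C)
    (hlam : lam ∈ Icc (0 : ℝ) 1)
    (h : ∀ x, u x - γ = ψ x - lam * ∫ s, ψ s ∂ν x - (1 - lam) * ∫ s, ψ s ∂μ)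
    (hB : ∀ x, B ≤ u x) : B ≤ γ := by
  have := nonempty_of_isProbabilityMeasure μ
  suffices B - γ + ⨅ s, ψ s ≤ ⨅ s, ψ s by linarith
  refine le_ciInf fun x ↦ ?_
  have := (mix_integral_mem_Icc_ciInf_ciSup hψ hC hlam (μ := μ) (ν x)).1
  linarith [h x, hB x]

end PressDyson

theorem donation_no_self_equalizer_general
    (K : ℝ) (hK : 0 < K)
    (b c : Set.Icc (0 : ℝ) K → ℝ) (hcm : Monotone c)
    (zero top : Set.Icc (0 : ℝ) K) (hzero : (zero : ℝ) = 0) (htop : (top : ℝ) = K)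
    (hb0 : b zero = 0) (hc0 : c zero = 0)
    (hbc : ∀ s : Set.Icc (0 : ℝ) K, 0 < (s : ℝ) → c s < b s)
    (γ : ℝ) (lam : ℝ) (hlam : lam ∈ Set.Ioc (0 : ℝ) 1) :
    ¬ ∃ (ψ : Set.Icc (0 : ℝ) K → ℝ) (Cψ : ℝ)
        (σX : Kernel (Set.Icc (0 : ℝ) K × Set.Icc (0 : ℝ) K) (Set.Icc (0 : ℝ) K))
        (σ0 : Measure (Set.Icc (0 : ℝ) K)),
      Measurable ψ ∧ (∀ s, |ψ s| ≤ Cψ) ∧ IsMarkovKernel σX ∧ IsProbabilityMeasure σ0 ∧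
      ∀ x y : Set.Icc (0 : ℝ) K,
        (b y - c x) - γ =
          ψ x - lam * ∫ s, ψ s ∂ (σX (x, y)) - (1 - lam) * ∫ s, ψ s ∂ σ0 := by
  rintro ⟨ψ, Cψ, σX, σ0, hψ, hC, hσX, hσ0, heq⟩
  have hlam' : lam ∈ Icc (0 : ℝ) 1 := Ioc_subset_Icc_self hlam
  have hzero_le (x : Icc (0 : ℝ) K) : zero ≤ x := by
    rw [← Subtype.coe_le_coe, hzero]; exact x.2.1
  have hle_top (x : Icc (0 : ℝ) K) : x ≤ top := by
    rw [← Subtype.coe_le_coe, htop]; exact x.2.2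
  have hγ_nonpos : γ ≤ 0 :=
    le_of_pressDyson_eq_of_forall_le hψ hC hlam' (fun x ↦ heq x zero)
      fun x ↦ by linarith [hcm (hzero_le x)]
  have hγ_ge : b top - c top ≤ γ :=
    ge_of_pressDyson_eq_of_forall_ge hψ hC hlam' (fun x ↦ heq x top)
      fun x ↦ by linarith [hcm (hle_top x)]
  linarith [hbc top (htop.symm ▸ hK)]

/-- **Impossibility of self-equalizing strategies in the continuous Donation Game.**
For every `γ ∈ ℝ` and `lam ∈ (0,1]` there is no bounded measurable `ψ`, memory-one
strategy `σX`, and initial action `σ0` with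
`u_X(x,y) − γ = ψ(x) − lam·∫ ψ dσX[x,y] − (1−lam)·∫ ψ dσ0` for all
`x, y ∈ [0,K]`: player X cannot unilaterally set her own payoff. -/
theorem donation_no_self_equalizer
    (K : ℝ) (hK : 0 < K)
    (b c : Set.Icc (0 : ℝ) K → ℝ) (hbm : Monotone b) (hcm : Monotone c)
    (hbmeas : Measurable b) (hcmeas : Measurable c)
    (zero top : Set.Icc (0 : ℝ) K) (hzero : (zero : ℝ) = 0) (htop : (top : ℝ) = K)
    (hb0 : b zero = 0) (hc0 : c zero = 0)
    (hbc : ∀ s : Set.Icc (0 : ℝ) K, 0 < (s : ℝ) → c s < b s)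
    (γ : ℝ) (lam : ℝ) (hlam : lam ∈ Set.Ioc (0 : ℝ) 1) :
    ¬ ∃ (ψ : Set.Icc (0 : ℝ) K → ℝ) (Cψ : ℝ)
        (σX : Kernel (Set.Icc (0 : ℝ) K × Set.Icc (0 : ℝ) K) (Set.Icc (0 : ℝ) K))
        (σ0 : Measure (Set.Icc (0 : ℝ) K)),
      Measurable ψ ∧ (∀ s, |ψ s| ≤ Cψ) ∧ IsMarkovKernel σX ∧ IsProbabilityMeasure σ0 ∧
      ∀ x y : Set.Icc (0 : ℝ) K,
        (b y - c x) - γ =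
          ψ x - lam * ∫ s, ψ s ∂ (σX (x, y)) - (1 - lam) * ∫ s, ψ s ∂ σ0 :=
  donation_no_self_equalizer_general K hK b c hcm zero top hzero htop hb0 hc0 hbc γ lam hlam
end

section
/- Deterministic equalizer strategies in the continuous Donation Game: In the continuous Donation Game, assume additionally that b is continuous and strictly increasing, so that b is a continuous strictly increasing bijection from [0,K] onto [0, b(K)]. Let 0 ≤ γ ≤ b(K) − c(K), let λ ∈ (0,1) satisfy λ ≥ c(K)/b(K), and let x_0 ∈ [0,K] satisfy (γ − λ·b(K) + c(K)) / (1−λ) ≤ b(x_0) ≤ γ / (1−λ). Then for every y ∈ [0,K] the value w(y) := (c(y) + γ − (1−λ)·b(x_0)) / λ lies in [0, b(K)], so the reaction function r(x,y) := b^{−1}(w(y)) is well defined, and the deterministic memory-one strategy σ_X[x,y] = δ_{r(x,y)} with initial action σ_X^0 = δ_{x_0} satisfies: for every play sequence (ν_t)_{t≥0} compatible with (σ_X^0, σ_X), the opponent's expected discounted payoff satisfies π_Y = γ. -/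
/-!
Let `B t` be the expected value of `b x` under `ν t`. Since `X` plays `r (x, y)` after `(x, y)`
and `lam * b (r (x, y)) = c y + γ - (1 - lam) * b x₀`, the expected payoff of `Y` in round `t`
is `B t - lam * B (t + 1) + γ - (1 - lam) * b x₀`, whatever `Y` does. The discounted sum of
`B t - lam * B (t + 1)` telescopes to `B 0 = b x₀`, which leaves exactly `γ`.
-/

open MeasureTheory ProbabilityTheory Set

lemma tsum_pow_mul_sub_mul_succ {lam M : ℝ} (h0 : 0 ≤ lam) (h1 : lam < 1) {B : ℕ → ℝ}
    (hB : ∀ t, |B t| ≤ M) : ∑' t, lam ^ t * (B t - lam * B (t + 1)) = B 0 := by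
  set f : ℕ → ℝ := fun t => lam ^ t * B t
  have hf : Summable f := by
    refine Summable.of_norm_bounded ((summable_geometric_of_lt_one h0 h1).mul_right M) fun t => ?_
    rw [Real.norm_eq_abs, abs_mul, abs_of_nonneg (pow_nonneg h0 t)]
    exact mul_le_mul_of_nonneg_left (hB t) (pow_nonneg h0 t)
  calc ∑' t, lam ^ t * (B t - lam * B (t + 1)) = ∑' t, (f t - f (t + 1)) := by
        congr 1; ext t; simp only [f, pow_succ]; ring
    _ = B 0 := by
        rw [hf.tsum_sub ((summable_nat_add_iff 1).mpr hf), hf.tsum_eq_zero_add]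
        simp [f]

lemma discounted_tsum_sub_mul_succ_add {lam D M : ℝ} (h0 : 0 ≤ lam) (h1 : lam < 1)
    {B : ℕ → ℝ} (hB : ∀ t, |B t| ≤ M) :
    (1 - lam) * ∑' t, lam ^ t * (B t - lam * B (t + 1) + D) = (1 - lam) * B 0 + D := by
  have hgeo := summable_geometric_of_lt_one h0 h1
  have htel : Summable fun t => lam ^ t * (B t - lam * B (t + 1)) := by
    refine Summable.of_norm_bounded (hgeo.mul_right (M + lam * M)) fun t => ?_
    rw [Real.norm_eq_abs, abs_mul, abs_of_nonneg (pow_nonneg h0 t)]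
    refine mul_le_mul_of_nonneg_left ?_ (pow_nonneg h0 t)
    calc |B t - lam * B (t + 1)| ≤ |B t| + lam * |B (t + 1)| := by
          simpa [abs_mul, abs_of_nonneg h0] using abs_sub (B t) (lam * B (t + 1))
      _ ≤ M + lam * M := by gcongr <;> exact hB _
  simp only [mul_add]
  rw [htel.tsum_add (hgeo.mul_right D), tsum_pow_mul_sub_mul_succ h0 h1 hB, tsum_mul_right,
    tsum_geometric_of_lt_one h0 h1]
  field_simp [(sub_pos.mpr h1).ne']

section PlaySequence

variable {α β : Type*} [MeasurableSpace α] [MeasurableSpace β]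

lemma integral_comp_fst_of_apply_prod_univ {E : Type*} [NormedAddCommGroup E] [NormedSpace ℝ E]
    {μ : Measure (α × β)} {ν : Measure α} (h : ∀ s, MeasurableSet s → μ (s ×ˢ univ) = ν s)
    {f : α → E} (hf : AEStronglyMeasurable f ν) : ∫ q, f q.1 ∂μ = ∫ x, f x ∂ν := by
  have hfst : μ.map Prod.fst = ν :=
    Measure.ext fun s hs => by rw [Measure.map_apply measurable_fst hs, ← prod_univ, h s hs]
  rw [← hfst] at hf ⊢
  exact (integral_map measurable_fst.aemeasurable hf).symm

lemma lintegral_dirac_apply_eq_map (μ : Measure α) {r : α → β} (hr : Measurable r)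
    {s : Set β} (hs : MeasurableSet s) : ∫⁻ a, Measure.dirac (r a) s ∂μ = μ.map r s := by
  rw [← Measure.bind_dirac_eq_map μ hr]
  exact (Measure.bind_apply hs (Measure.measurable_dirac.comp hr).aemeasurable).symm

lemma discounted_payoff_of_deterministic_reaction {lam D M : ℝ} (h0 : 0 < lam) (h1 : lam < 1)
    {b : α → ℝ} {c : β → ℝ} (hb : Measurable b) (hbM : ∀ x, |b x| ≤ M)
    {r : α × β → α} (hr : Measurable r) (hbr : ∀ q, lam * b (r q) = c q.2 + D)
    {σ : Kernel (α × β) α} (hσ : ∀ q, σ q = Measure.dirac (r q)) {x₀ : α}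
    {ν : ℕ → Measure (α × β)} [∀ t, IsProbabilityMeasure (ν t)]
    (hν0 : ∀ s, MeasurableSet s → ν 0 (s ×ˢ univ) = Measure.dirac x₀ s)
    (hνsucc : ∀ t s, MeasurableSet s → ν (t + 1) (s ×ˢ univ) = ∫⁻ q, σ q s ∂ν t) :
    (1 - lam) * ∑' t, lam ^ t * ∫ q, (b q.1 - c q.2) ∂ν t = (1 - lam) * b x₀ + D := by
  have hbM' (x) : ‖b x‖ ≤ M := hbM x
  have hint_fst (t) : Integrable (fun q => b q.1) (ν t) :=
    .of_bound (hb.comp measurable_fst).aestronglyMeasurable M (ae_of_all _ fun q => hbM' q.1)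
  have hint_r (t) : Integrable (fun q => b (r q)) (ν t) :=
    .of_bound (hb.comp hr).aestronglyMeasurable M (ae_of_all _ fun q => hbM' (r q))
  have hB_le (t) : |∫ q, b q.1 ∂ν t| ≤ M := by
    simpa using norm_integral_le_of_norm_le_const (μ := ν t) (ae_of_all _ fun q => hbM' q.1)
  have hB0 : ∫ q, b q.1 ∂ν 0 = b x₀ := by
    rw [integral_comp_fst_of_apply_prod_univ hν0 hb.aestronglyMeasurable,
      integral_dirac' _ _ hb.stronglyMeasurable]
  have hB_succ (t) : ∫ q, b q.1 ∂ν (t + 1) = ∫ q, b (r q) ∂ν t := by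
    have hmarg (s) (hs : MeasurableSet s) : ν (t + 1) (s ×ˢ univ) = (ν t).map r s := by
      simp only [hνsucc t s hs, hσ, lintegral_dirac_apply_eq_map _ hr hs]
    rw [integral_comp_fst_of_apply_prod_univ hmarg hb.aestronglyMeasurable,
      integral_map hr.aemeasurable hb.aestronglyMeasurable]
  have hstage (t) : ∫ q, (b q.1 - c q.2) ∂ν t =
      ∫ q, b q.1 ∂ν t - lam * ∫ q, b q.1 ∂ν (t + 1) + D := by
    have hpay : (fun q => b q.1 - c q.2) = fun q => b q.1 - lam * b (r q) + D :=
      funext fun q => by linarith [hbr q]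
    rw [hpay, integral_add (f := fun q => b q.1 - lam * b (r q))
        ((hint_fst t).sub ((hint_r t).const_mul lam)) (integrable_const D),
      integral_sub (hint_fst t) ((hint_r t).const_mul lam), integral_const_mul, hB_succ]
    simp
  simp only [hstage]
  rw [discounted_tsum_sub_mul_succ_add h0.le h1 hB_le, hB0]

end PlaySequence

lemma reaction_mem_Icc_s15 {lam γ bx₀ bmax cy cmax : ℝ} (h0 : 0 < lam) (h1 : lam < 1)
    (hcy : 0 ≤ cy) (hcmax : cy ≤ cmax) (hl : (γ - lam * bmax + cmax) / (1 - lam) ≤ bx₀)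
    (hu : bx₀ ≤ γ / (1 - lam)) : (cy + γ - (1 - lam) * bx₀) / lam ∈ Icc 0 bmax := by
  have h1' : 0 < 1 - lam := sub_pos.mpr h1
  rw [div_le_iff₀ h1'] at hl
  rw [le_div_iff₀ h1'] at hu
  constructor
  · apply div_nonneg _ h0.le
    linarith
  · rw [div_le_iff₀ h0]
    linarith

theorem donation_deterministic_equalizer_general
    (K : ℝ)
    (b c : Set.Icc (0 : ℝ) K → ℝ) (hbm : Monotone b) (hcm : Monotone c)
    (hbcont : Continuous b)
    (zero top : Set.Icc (0 : ℝ) K) (hzero : (zero : ℝ) = 0) (htop : (top : ℝ) = K)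
    (hb0 : b zero = 0) (hc0 : c zero = 0)
    (γ : ℝ)
    (lam : ℝ) (hlam : lam ∈ Set.Ioo (0 : ℝ) 1)
    (x₀ : Set.Icc (0 : ℝ) K)
    (hx₀l : (γ - lam * b top + c top) / (1 - lam) ≤ b x₀)
    (hx₀u : b x₀ ≤ γ / (1 - lam))
    (w : Set.Icc (0 : ℝ) K → ℝ)
    (hw : ∀ y, w y = (c y + γ - (1 - lam) * b x₀) / lam) :
    (∀ y, w y ∈ Set.Icc (0 : ℝ) (b top)) ∧
    (∃ r : Set.Icc (0 : ℝ) K × Set.Icc (0 : ℝ) K → Set.Icc (0 : ℝ) K,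
      ∀ q, b (r q) = w q.2) ∧
    (∀ r : Set.Icc (0 : ℝ) K × Set.Icc (0 : ℝ) K → Set.Icc (0 : ℝ) K,
      Measurable r → (∀ q, b (r q) = w q.2) →
      ∀ σX : Kernel (Set.Icc (0 : ℝ) K × Set.Icc (0 : ℝ) K) (Set.Icc (0 : ℝ) K),
        (∀ q, σX q = Measure.dirac (r q)) →
      ∀ ν : ℕ → Measure (Set.Icc (0 : ℝ) K × Set.Icc (0 : ℝ) K),
        (∀ t, IsProbabilityMeasure (ν t)) →
        (∀ E : Set (Set.Icc (0 : ℝ) K), MeasurableSet E →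
          ν 0 (E ×ˢ Set.univ) = Measure.dirac x₀ E) →
        (∀ t : ℕ, ∀ E : Set (Set.Icc (0 : ℝ) K), MeasurableSet E →
          ν (t + 1) (E ×ˢ Set.univ) = ∫⁻ q, σX q E ∂ ν t) →
        (1 - lam) * ∑' t : ℕ, lam ^ t * ∫ q, (b q.1 - c q.2) ∂ ν t = γ) := by
  have hzero_le (s : Icc (0 : ℝ) K) : zero ≤ s := Subtype.coe_le_coe.mp (hzero.trans_le s.2.1)
  have hle_top (s : Icc (0 : ℝ) K) : s ≤ top := Subtype.coe_le_coe.mp (s.2.2.trans_eq htop.symm)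
  have hb_mem (s) : b s ∈ Icc 0 (b top) := ⟨hb0.ge.trans (hbm (hzero_le s)), hbm (hle_top s)⟩
  have hc_mem (s) : c s ∈ Icc 0 (c top) := ⟨hc0.ge.trans (hcm (hzero_le s)), hcm (hle_top s)⟩
  have hw_mem (y) : w y ∈ Icc 0 (b top) :=
    hw y ▸ reaction_mem_Icc_s15 hlam.1 hlam.2 (hc_mem y).1 (hc_mem y).2 hx₀l hx₀u
  refine ⟨hw_mem, ?_, fun r hr hbr σX hσX ν hν hν0 hνsucc => ?_⟩
  · have : ConnectedSpace (Icc (0 : ℝ) K) :=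
      Subtype.connectedSpace (isConnected_Icc (zero.2.1.trans zero.2.2))
    choose r hr using fun q : Icc (0 : ℝ) K × Icc (0 : ℝ) K =>
      intermediate_value_univ zero top hbcont (by rw [hb0]; exact hw_mem q.2)
    exact ⟨r, hr⟩
  have hreact (q : Icc (0 : ℝ) K × Icc (0 : ℝ) K) :
      lam * b (r q) = c q.2 + (γ - (1 - lam) * b x₀) := by
    rw [hbr, hw, mul_div_cancel₀ _ hlam.1.ne']
    ring
  have hb_abs (s) : |b s| ≤ b top := by
    rw [abs_of_nonneg (hb_mem s).1]
    exact (hb_mem s).2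
  rw [discounted_payoff_of_deterministic_reaction hlam.1 hlam.2 hbcont.measurable hb_abs hr hreact
    hσX hν0 hνsucc]
  ring

/-- **Deterministic equalizer strategies in the continuous Donation Game.**
Assume `b` is continuous and strictly increasing (so that `b` is a continuous
strictly increasing bijection from `[0,K]` onto `[0, b(K)]`). For
`0 ≤ γ ≤ b(K) − c(K)`, `lam ≥ c(K)/b(K)`, and a feasible initial action `x₀`, the
value `w(y) = (c(y) + γ − (1−lam)·b(x₀))/lam` lies in `[0, b(K)]` for every `y`,
the reaction function `r = b⁻¹ ∘ w` is well defined (it exists and is characterized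
by `b(r(x,y)) = w(y)`), and the deterministic strategy `σX[x,y] = δ_{r(x,y)}` with
initial action `δ_{x₀}` enforces `π_Y = γ`. -/
theorem donation_deterministic_equalizer
    (K : ℝ) (hK : 0 < K)
    (b c : Set.Icc (0 : ℝ) K → ℝ) (hbm : Monotone b) (hcm : Monotone c)
    (hbmeas : Measurable b) (hcmeas : Measurable c)
    (hbcont : Continuous b) (hbsm : StrictMono b)
    (zero top : Set.Icc (0 : ℝ) K) (hzero : (zero : ℝ) = 0) (htop : (top : ℝ) = K)
    (hb0 : b zero = 0) (hc0 : c zero = 0)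
    (hbc : ∀ s : Set.Icc (0 : ℝ) K, 0 < (s : ℝ) → c s < b s)
    (γ : ℝ) (hγ : 0 ≤ γ ∧ γ ≤ b top - c top)
    (lam : ℝ) (hlam : lam ∈ Set.Ioo (0 : ℝ) 1)
    (hlam' : c top / b top ≤ lam)
    (x₀ : Set.Icc (0 : ℝ) K)
    (hx₀l : (γ - lam * b top + c top) / (1 - lam) ≤ b x₀)
    (hx₀u : b x₀ ≤ γ / (1 - lam))
    (w : Set.Icc (0 : ℝ) K → ℝ)
    (hw : ∀ y, w y = (c y + γ - (1 - lam) * b x₀) / lam) :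
    (∀ y, w y ∈ Set.Icc (0 : ℝ) (b top)) ∧
    (∃ r : Set.Icc (0 : ℝ) K × Set.Icc (0 : ℝ) K → Set.Icc (0 : ℝ) K,
      ∀ q, b (r q) = w q.2) ∧
    (∀ r : Set.Icc (0 : ℝ) K × Set.Icc (0 : ℝ) K → Set.Icc (0 : ℝ) K,
      Measurable r → (∀ q, b (r q) = w q.2) →
      ∀ σX : Kernel (Set.Icc (0 : ℝ) K × Set.Icc (0 : ℝ) K) (Set.Icc (0 : ℝ) K),
        (∀ q, σX q = Measure.dirac (r q)) →
      ∀ ν : ℕ → Measure (Set.Icc (0 : ℝ) K × Set.Icc (0 : ℝ) K),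
        (∀ t, IsProbabilityMeasure (ν t)) →
        (∀ E : Set (Set.Icc (0 : ℝ) K), MeasurableSet E →
          ν 0 (E ×ˢ Set.univ) = Measure.dirac x₀ E) →
        (∀ t : ℕ, ∀ E : Set (Set.Icc (0 : ℝ) K), MeasurableSet E →
          ν (t + 1) (E ×ˢ Set.univ) = ∫⁻ q, σX q E ∂ ν t) →
        (1 - lam) * ∑' t : ℕ, lam ^ t * ∫ q, (b q.1 - c q.2) ∂ ν t = γ) :=
  donation_deterministic_equalizer_general K b c hbm hcm hbcont zero top hzero htop hb0 hc0 γ lam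
    hlam x₀ hx₀l hx₀u w hw
end
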